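/- arXiv:1611.06483 — 2 statements merged into one kernel-verified Lean document; each statement's English description precedes it below -/
import Mathlib

section
/- Let β, x₁,…,x_d, b₁, b₂,… be independent indeterminates and work in the ring of formal power series over ℤ in these variables (where each 1+βx_i is invertible). For a partition-like integer vector a = (a₁,…,a_d) ∈ ℤ^d with a_i + d - i ≥ 0 for every i, the following determinant identity holds: det( [x_j|b]^{a_i+d-i} (1+βx_j)^{i-1} )_{1≤i,j≤d} = (∏_{1≤i<j≤d} (x_i - x_j)) · det( Σ_{s≥0} C(i-d, s) β^s G^{(a_i+d-i)}_{a_i+j-i+s} )_{1≤i,j≤d}, where C(n,s) denotes the generalized binomial coefficient defined by (1+x)^n = Σ_{s≥0} C(n,s) x^s for n ∈ ℤ (so C(n,s) = (-1)^s C(s-n-1, s) for n < 0), and the infinite sums over s converge in the formal power series topology. -/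
open scoped BigOperators

namespace GrothDet

/-- Index type for the indeterminates: `β`, `x₁,…,x_d`, `b₁,b₂,…`. -/
abbrev Idx (d : ℕ) := Unit ⊕ Fin d ⊕ ℕ

/-- The ambient ring: formal power series over `ℤ` in `β`, the `xᵢ` and the `bⱼ`. -/
abbrev R (d : ℕ) := MvPowerSeries (Idx d) ℤ

noncomputable def β (d : ℕ) : R d := MvPowerSeries.X (Sum.inl ())
noncomputable def x (d : ℕ) (i : Fin d) : R d := MvPowerSeries.X (Sum.inr (Sum.inl i))
noncomputable def b (d : ℕ) (ℓ : ℕ) : R d := MvPowerSeries.X (Sum.inr (Sum.inr ℓ))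

/-- `x ⊕ y := x + y + βxy`. -/
noncomputable def oplus (d : ℕ) (u v : R d) : R d := u + v + β d * u * v

/-- `[y|b]^k := (y ⊕ b₁)⋯(y ⊕ b_k)`. -/
noncomputable def fb (d : ℕ) (y : R d) (k : ℕ) : R d :=
  ∏ ℓ ∈ Finset.range k, oplus d y (b d ℓ)

/-- The multiplicative inverse of `1 + β * x j` (a unit since its constant term is `1`). -/
noncomputable def invOneAdd (d : ℕ) (j : Fin d) : R d :=
  MvPowerSeries.invOfUnit (1 + β d * x d j) 1

/-- `F^{(k)}(u) = ∏ᵢ (1+βxᵢ)/(1-xᵢu) · ∏_{ℓ=1}^k (1+(u+β)b_ℓ)` as a power series in `u`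
over `R d`; here `(1-xᵢu)⁻¹ = ∑_n xᵢⁿ uⁿ`. -/
noncomputable def F (d : ℕ) (k : ℕ) : PowerSeries (R d) :=
  (∏ i : Fin d,
      PowerSeries.C (1 + β d * x d i) * PowerSeries.mk fun n => x d i ^ n) *
    ∏ ℓ ∈ Finset.range k,
      (1 + (PowerSeries.X + PowerSeries.C (β d)) * PowerSeries.C (b d ℓ))

/-- `[u^t] F^{(k)}(u)`, extended by `0` in negative degrees `t`. -/
noncomputable def Fcoeff (d : ℕ) (k : ℕ) (t : ℤ) : R d :=
  if 0 ≤ t then PowerSeries.coeff t.toNat (F d k) else 0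

/-- The sum `∑_{s≥0} f s` of a family of power series such that `β^s ∣ f s`:
it is defined coefficientwise; on the coefficient of a monomial `n` only the
(finitely many) terms with `s ≤ n(β)` contribute, and the value is the limit of the
partial sums in the formal power series topology. -/
noncomputable def seriesSum (d : ℕ) (f : ℕ → R d) : R d :=
  (fun n => ∑ s ∈ Finset.range (n (Sum.inl ()) + 1), MvPowerSeries.coeff n (f s) :
    (Idx d →₀ ℕ) → ℤ)

/-- `G^{(k)}_m = ∑_{s≥0} (-β)^s [u^{m+s}] F^{(k)}(u)`. -/
noncomputable def G (d : ℕ) (k : ℕ) (m : ℤ) : R d :=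
  seriesSum d fun s => (-β d) ^ s * Fcoeff d k (m + s)

/-- The `p`-th elementary symmetric function of the family `f` restricted to `S`. -/
noncomputable def esym (d : ℕ) (S : Finset (Fin d)) (p : ℕ) (f : Fin d → R d) : R d :=
  ∑ t ∈ S.powersetCard p, ∏ i ∈ t, f i

/-- `x_i/(1+βx_i) = -x̄_i`. -/
noncomputable def xbar (d : ℕ) (i : Fin d) : R d := x d i * invOneAdd d i


/-!
Let `E` be the matrix whose `l`-th column lists the coefficients of `∏_{t ≠ l} (X - x_t)`.
Evaluating these polynomials at the nodes shows that `V E` is diagonal for the Vandermonde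
matrix `V`, whence `det E = ∏_{i<j} (x_i - x_j)`.

With `k_i = a_i + d - i`, the relation `G_m + β G_{m+1} = [u^m] F` and Pascal's rule turn the
entry `∑_s C(i-d, s) β^s G_{a_i+j-i+s}` into `∑_s C(i-d-1, s) β^s [u^{a_i+j-i+s}] F^{(k_i)}`.
Multiplying by `E` multiplies `F^{(k)}(u)` by `∏_{t ≠ l} (1 - x_t u)`, which cancels every
geometric factor except `1/(1 - x_l u)`; the coefficient of `u^{k+s}` in the result is
`∏_t (1 + βx_t) · x_l^s [x_l|b]^k`, and the binomial sum over `s` then produces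
`(1 + βx_l)^{i-1-d}`. So the product is the left-hand matrix times the column factors
`(1 + βx_l)^{-d}` and the scalar `∏_t (1 + βx_t)`, whose contributions to the determinant cancel.
-/

open Finset

variable {d : ℕ}

section SeriesSum

lemma coeff_seriesSum (f : ℕ → R d) (n : Idx d →₀ ℕ) :
    MvPowerSeries.coeff n (seriesSum d f) =
      ∑ s ∈ range (n (Sum.inl ()) + 1), MvPowerSeries.coeff n (f s) := rfl

/-- Coefficientwise `β ^ s ∣ f s`: for such families `seriesSum d f` is the sum of the series
`∑ₛ f s` in the formal power series topology. -/
def BetaPowDvd (d : ℕ) (f : ℕ → R d) : Prop :=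
  ∀ (n : Idx d →₀ ℕ) (s : ℕ), n (Sum.inl ()) < s → MvPowerSeries.coeff n (f s) = 0

lemma coeff_β_pow_mul_of_lt {n : Idx d →₀ ℕ} {s : ℕ} (h : n (Sum.inl ()) < s) (y : R d) :
    MvPowerSeries.coeff n (β d ^ s * y) = 0 := by
  rw [β, MvPowerSeries.X_pow_eq, MvPowerSeries.coeff_monomial_mul,
    if_neg (Finsupp.single_le_iff.not.mpr h.not_ge)]

lemma betaPowDvd_β_pow_mul (y : ℕ → R d) : BetaPowDvd d fun s => β d ^ s * y s :=
  fun _ _ h => coeff_β_pow_mul_of_lt h _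

lemma betaPowDvd_smul_β_pow_mul (c : ℕ → ℤ) (y : ℕ → R d) :
    BetaPowDvd d fun s => c s • (β d ^ s * y s) := by
  simpa only [mul_smul_comm] using betaPowDvd_β_pow_mul fun s => c s • y s

lemma coeff_seriesSum_of_le {f : ℕ → R d} (hf : BetaPowDvd d f) {n : Idx d →₀ ℕ} {M : ℕ}
    (hM : n (Sum.inl ()) ≤ M) :
    MvPowerSeries.coeff n (seriesSum d f) = ∑ s ∈ range (M + 1), MvPowerSeries.coeff n (f s) := by
  rw [coeff_seriesSum]
  refine sum_subset (range_subset_range.mpr (by omega)) fun s _ hs => hf n s ?_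
  rw [mem_range] at hs
  omega

lemma seriesSum_zero : seriesSum d (fun _ => 0) = 0 := by
  ext n
  simp [coeff_seriesSum]

lemma seriesSum_add (f g : ℕ → R d) :
    seriesSum d (fun s => f s + g s) = seriesSum d f + seriesSum d g := by
  ext n
  simp only [map_add, coeff_seriesSum, sum_add_distrib]

lemma seriesSum_sum {ι : Type*} (T : Finset ι) (f : ι → ℕ → R d) :
    seriesSum d (fun s => ∑ j ∈ T, f j s) = ∑ j ∈ T, seriesSum d (f j) := by
  ext n
  simp only [map_sum, coeff_seriesSum]
  exact sum_comm

lemma mul_seriesSum (c : R d) {f : ℕ → R d} (hf : BetaPowDvd d f) :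
    c * seriesSum d f = seriesSum d fun s => c * f s := by
  ext n
  rw [coeff_seriesSum, MvPowerSeries.coeff_mul]
  simp_rw [MvPowerSeries.coeff_mul]
  rw [sum_comm]
  refine sum_congr rfl fun p hp => ?_
  have hle : p.2 (Sum.inl ()) ≤ n (Sum.inl ()) := by
    rw [← (mem_antidiagonal.mp hp)]
    exact le_add_self
  rw [coeff_seriesSum_of_le hf hle, mul_sum]

lemma seriesSum_mul (c : R d) {f : ℕ → R d} (hf : BetaPowDvd d f) :
    seriesSum d f * c = seriesSum d fun s => f s * c := by
  simp only [mul_comm _ c, mul_seriesSum c hf]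

lemma seriesSum_eq_add_seriesSum_succ {f : ℕ → R d} (hf : BetaPowDvd d f) :
    seriesSum d f = f 0 + seriesSum d fun s => f (s + 1) := by
  ext n
  rw [map_add, coeff_seriesSum_of_le hf (Nat.le_succ _), coeff_seriesSum, sum_range_succ',
    add_comm]

end SeriesSum

section Binomial

lemma seriesSum_choose_succ (p : ℤ) (z : ℕ → R d) :
    seriesSum d (fun s => Ring.choose (p + 1) s • (β d ^ s * z s)) =
      seriesSum d (fun s => Ring.choose p s • (β d ^ s * z s)) +
        β d * seriesSum d (fun s => Ring.choose p s • (β d ^ s * z (s + 1))) := by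
  set w : ℕ → R d := fun s => (Ring.choose (p + 1) s - Ring.choose p s) • (β d ^ s * z s)
  have hsplit : seriesSum d (fun s => Ring.choose (p + 1) s • (β d ^ s * z s)) =
      seriesSum d (fun s => Ring.choose p s • (β d ^ s * z s)) + seriesSum d w := by
    rw [← seriesSum_add]
    simp only [w, sub_smul, add_sub_cancel]
  have hw : seriesSum d w = β d * seriesSum d fun s => Ring.choose p s • (β d ^ s * z (s + 1)) := by
    rw [seriesSum_eq_add_seriesSum_succ (f := w) (betaPowDvd_smul_β_pow_mul _ _),
      mul_seriesSum _ (betaPowDvd_smul_β_pow_mul _ _)]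
    simp only [w, Ring.choose_zero_right, sub_self, zero_smul, zero_add, Ring.choose_succ_succ,
      add_sub_cancel_right, mul_smul_comm, pow_succ', mul_assoc]
  rw [hsplit, hw]

/-- `(1 + β y) ^ p` for an integer exponent `p`. -/
noncomputable def binomSeries (y : R d) (p : ℤ) : R d :=
  seriesSum d fun s => Ring.choose p s • (β d ^ s * y ^ s)

lemma binomSeries_zero (y : R d) : binomSeries y 0 = 1 := by
  rw [binomSeries, seriesSum_eq_add_seriesSum_succ (betaPowDvd_smul_β_pow_mul _ _)]
  simp only [Ring.choose_zero_right, Ring.choose_zero_succ, zero_smul, seriesSum_zero]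
  simp

lemma one_add_mul_binomSeries (y : R d) (p : ℤ) :
    (1 + β d * y) * binomSeries y p = binomSeries y (p + 1) := by
  have hy : y * binomSeries y p =
      seriesSum d fun s => Ring.choose p s • (β d ^ s * y ^ (s + 1)) := by
    rw [binomSeries, mul_seriesSum _ (betaPowDvd_smul_β_pow_mul _ _)]
    simp only [mul_smul_comm, pow_succ']
    ring_nf
  rw [add_mul, one_mul, mul_assoc, hy, binomSeries, binomSeries, seriesSum_choose_succ]

lemma one_add_pow_mul_binomSeries_neg (y : R d) (e : ℕ) :
    (1 + β d * y) ^ e * binomSeries y (-e) = 1 := by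
  induction e with
  | zero => simpa using binomSeries_zero y
  | succ e ih =>
    rw [pow_succ, mul_assoc, one_add_mul_binomSeries, Nat.cast_succ, neg_add,
      neg_add_cancel_right, ih]

lemma binomSeries_sub_mul_one_add_pow (y : R d) {i n : ℕ} (h : i ≤ n) :
    binomSeries y ((i : ℤ) - n) * (1 + β d * y) ^ n = (1 + β d * y) ^ i := by
  rw [← Nat.sub_add_cancel h, pow_add, ← mul_assoc, mul_comm (binomSeries _ _),
    show (i : ℤ) - ↑(n - i + i) = -↑(n - i) by push_cast; ring,
    one_add_pow_mul_binomSeries_neg, one_mul]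

end Binomial

section G

lemma betaPowDvd_neg_β_pow_mul (y : ℕ → R d) : BetaPowDvd d fun s => (-β d) ^ s * y s := by
  intro n s h
  beta_reduce
  rw [neg_pow, mul_comm ((-1) ^ s), mul_assoc]
  exact coeff_β_pow_mul_of_lt h _

lemma Fcoeff_eq_G_add_β_mul_G (k : ℕ) (m : ℤ) :
    Fcoeff d k m = G d k m + β d * G d k (m + 1) := by
  have htail : (seriesSum d fun s => (-β d) ^ (s + 1) * Fcoeff d k (m + (s + 1 : ℕ))) =
      -β d * G d k (m + 1) := by
    rw [G, mul_seriesSum _ (betaPowDvd_neg_β_pow_mul _)]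
    congr 1
    funext s
    rw [pow_succ', mul_assoc]
    push_cast
    ring_nf
  have hG : G d k m = Fcoeff d k m - β d * G d k (m + 1) := by
    conv_lhs => rw [G, seriesSum_eq_add_seriesSum_succ (betaPowDvd_neg_β_pow_mul _), htail]
    simp only [pow_zero, one_mul, Nat.cast_zero, add_zero]
    ring
  rw [hG]
  ring

lemma seriesSum_choose_G (k : ℕ) (q m : ℤ) :
    seriesSum d (fun s => Ring.choose q s • (β d ^ s * G d k (m + s))) =
      seriesSum d fun s => Ring.choose (q - 1) s • (β d ^ s * Fcoeff d k (m + s)) := by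
  have h := seriesSum_choose_succ (q - 1) fun s => G d k (m + s)
  rw [sub_add_cancel] at h
  rw [h, mul_seriesSum _ (betaPowDvd_smul_β_pow_mul _ _), ← seriesSum_add]
  congr 1
  funext s
  rw [Fcoeff_eq_G_add_β_mul_G, mul_smul_comm, ← smul_add]
  push_cast
  ring_nf

end G

section Nodal

open Polynomial Matrix

variable {K : Type*} [CommRing K]

lemma reflect_nodal [Nontrivial K] {ι : Type*} (s : Finset ι) (v : ι → K) :
    reflect #s (Lagrange.nodal s v) = ∏ i ∈ s, (1 - C (v i) * X) := by
  classical
  induction s using Finset.induction_on with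
  | empty => simp [reflect_one]
  | insert a s ha ih =>
    rw [Lagrange.nodal_insert_eq_nodal ha, card_insert_of_notMem ha, add_comm,
      reflect_mul _ _ (natDegree_X_sub_C_le (v a)) Lagrange.natDegree_nodal.le, ih, prod_insert ha,
      reflect_sub, reflect_one_X, reflect_C, pow_one]

noncomputable def nodalCoeffMatrix {n : ℕ} (v : Fin n → K) : Matrix (Fin n) (Fin n) K :=
  Matrix.of fun j l => (Lagrange.nodal (univ.erase l) v).coeff j

lemma natDegree_nodal_erase [Nontrivial K] {n : ℕ} (v : Fin n → K) (l : Fin n) :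
    (Lagrange.nodal (univ.erase l) v).natDegree = n - 1 := by
  rw [Lagrange.natDegree_nodal, card_erase_of_mem (mem_univ l), card_univ, Fintype.card_fin]

lemma vandermonde_mul_nodalCoeffMatrix [Nontrivial K] {n : ℕ} (v : Fin n → K) :
    vandermonde v * nodalCoeffMatrix v = diagonal fun l => ∏ t ∈ univ.erase l, (v l - v t) := by
  ext m l
  have hdeg : (Lagrange.nodal (univ.erase l) v).natDegree < n := by
    rw [natDegree_nodal_erase]
    exact Nat.sub_lt l.pos one_pos
  have heval : (vandermonde v * nodalCoeffMatrix v) m l =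
      (Lagrange.nodal (univ.erase l) v).eval (v m) := by
    rw [mul_apply, eval_eq_sum_range' hdeg, ← Fin.sum_univ_eq_sum_range]
    simp only [vandermonde_apply, nodalCoeffMatrix, of_apply, mul_comm]
  rw [heval, diagonal_apply]
  split_ifs with hml
  · rw [hml, Lagrange.eval_nodal]
  · exact Lagrange.eval_nodal_at_node (mem_erase.mpr ⟨hml, mem_univ m⟩)

lemma det_nodalCoeffMatrix [IsDomain K] {n : ℕ} {v : Fin n → K} (hv : Function.Injective v) :
    det (nodalCoeffMatrix v) = ∏ i, ∏ j ∈ Ioi i, (v i - v j) := by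
  have hoff : ∏ l, ∏ t ∈ univ.erase l, (v l - v t) =
      det (vandermonde v) * ∏ i, ∏ j ∈ Ioi i, (v i - v j) :=
    calc ∏ l, ∏ t ∈ univ.erase l, (v l - v t)
        = ∏ i, ∏ j ∈ Ioi i, (v i - v j) * (v j - v i) := by
          rw [prod_prod_Ioi_mul_eq_prod_prod_off_diag fun a b => v b - v a]
          simp [compl_eq_univ_sdiff, sdiff_singleton_eq_erase]
      _ = det (vandermonde v) * ∏ i, ∏ j ∈ Ioi i, (v i - v j) := by
          rw [det_vandermonde, ← prod_mul_distrib]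
          refine prod_congr rfl fun i _ => ?_
          rw [← prod_mul_distrib]
          exact prod_congr rfl fun j _ => mul_comm _ _
  have hdet := congrArg det (vandermonde_mul_nodalCoeffMatrix v)
  rw [det_mul, det_diagonal, hoff] at hdet
  exact mul_left_cancel₀ (det_vandermonde_ne_zero_iff.mpr hv) hdet

end Nodal

section GeneratingFunction

open PowerSeries

variable {K : Type*} [CommRing K]

lemma coeff_mul_coe_polynomial (f : K⟦X⟧) {Q : Polynomial K} {D : ℕ} (hQ : Q.natDegree < D)
    (N : ℕ) :
    coeff N (f * (Q : K⟦X⟧)) = ∑ b ∈ range D, Q.coeff b * if b ≤ N then coeff (N - b) f else 0 := by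
  have hvanish : ∀ b, ¬ (b < D ∧ b ≤ N) →
      (Q.coeff b * if b ≤ N then coeff (N - b) f else 0) = 0 := by
    intro b hb
    by_cases hbN : b ≤ N
    · rw [Q.coeff_eq_zero_of_natDegree_lt (by omega), zero_mul]
    · rw [if_neg hbN, mul_zero]
  rw [mul_comm, coeff_mul,
    Nat.sum_antidiagonal_eq_sum_range_succ fun i j => coeff i (Q : K⟦X⟧) * coeff j f]
  calc ∑ b ∈ range (N + 1), coeff b (Q : K⟦X⟧) * coeff (N - b) f
      = ∑ b ∈ range (N + 1), Q.coeff b * if b ≤ N then coeff (N - b) f else 0 :=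
        sum_congr rfl fun b hb => by
          rw [Polynomial.coeff_coe, if_pos (Nat.lt_succ_iff.mp (mem_range.mp hb))]
    _ = ∑ b ∈ range (N + 1 + D), Q.coeff b * if b ≤ N then coeff (N - b) f else 0 :=
        sum_subset (range_subset_range.mpr (by omega)) fun b _ hb =>
          hvanish b (by rw [mem_range] at hb; omega)
    _ = _ := (sum_subset (range_subset_range.mpr (by omega)) fun b _ hb =>
          hvanish b (by rw [mem_range] at hb; omega)).symm

lemma geom_mul_one_sub_C_mul_X (y : K) : (mk fun n => y ^ n) * (1 - C y * X) = 1 := by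
  simpa [rescale_mk, rescale_X] using congrArg (rescale y) (mk_one_mul_one_sub_eq_one K)

lemma prod_geom_mul_prod_erase {ι : Type*} [DecidableEq ι] {s : Finset ι} (v : ι → K) {l : ι}
    (hl : l ∈ s) :
    (∏ i ∈ s, mk fun n => v i ^ n) * ∏ t ∈ s.erase l, (1 - C (v t) * X) = mk fun n => v l ^ n := by
  rw [← mul_prod_erase s _ hl, mul_assoc, ← prod_mul_distrib,
    prod_congr rfl fun t _ => geom_mul_one_sub_C_mul_X (v t), prod_const_one, mul_one]

lemma coeff_geom_mul_prod (y z : K) (c : ℕ → K) {k N : ℕ} (h : k ≤ N) :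
    coeff N ((mk fun n => y ^ n) * ∏ ℓ ∈ range k, (1 + (X + C z) * C (c ℓ))) =
      y ^ (N - k) * ∏ ℓ ∈ range k, (y + c ℓ + z * y * c ℓ) := by
  induction k generalizing N with
  | zero => simp
  | succ k ih =>
    obtain ⟨N, rfl⟩ := Nat.exists_eq_add_of_le' (Nat.one_le_of_lt h)
    have hfactor : (1 + (X + C z) * C (c k) : K⟦X⟧) = C (1 + z * c k) + X * C (c k) := by
      simp only [map_add, map_mul, map_one]
      ring
    rw [prod_range_succ, ← mul_assoc, hfactor, mul_add, ← mul_assoc, map_add, coeff_mul_C,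
      coeff_mul_C, coeff_succ_mul_X, ih (by omega), ih (by omega), prod_range_succ,
      show N + 1 - k = N - k + 1 by omega, Nat.add_sub_add_right, pow_succ]
    ring

lemma sum_nodalCoeffMatrix_mul_coeff [Nontrivial K] {n : ℕ} (v : Fin n → K) (l : Fin n)
    (f : K⟦X⟧) (N : ℕ) :
    ∑ j, nodalCoeffMatrix v j l * (if n - 1 - j ≤ N then coeff (N - (n - 1 - j)) f else 0) =
      coeff N (f * ∏ t ∈ univ.erase l, (1 - C (v t) * X)) := by
  have hdeg : (Polynomial.reflect (n - 1) (Lagrange.nodal (univ.erase l) v)).natDegree < n :=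
    Polynomial.natDegree_reflect_le.trans_lt (by
      rw [natDegree_nodal_erase, max_self]
      exact Nat.sub_lt l.pos one_pos)
  have hrev : (Polynomial.reflect (n - 1) (Lagrange.nodal (univ.erase l) v) : K⟦X⟧) =
      ∏ t ∈ univ.erase l, (1 - C (v t) * X) := by
    rw [show n - 1 = #(univ.erase l) by simp, reflect_nodal,
      ← Polynomial.coeToPowerSeries.ringHom_apply, map_prod]
    simp [Polynomial.coe_C, Polynomial.coe_X]
  rw [← hrev, coeff_mul_coe_polynomial _ hdeg, ← sum_range_reflect]
  simp only [nodalCoeffMatrix, Matrix.of_apply]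
  rw [Fin.sum_univ_eq_sum_range fun j => (Lagrange.nodal (univ.erase l) v).coeff j *
    if n - 1 - j ≤ N then coeff (N - (n - 1 - j)) f else 0]
  refine sum_congr rfl fun b hb => ?_
  rw [mem_range] at hb
  rw [Polynomial.coeff_reflect, Polynomial.revAt_le (by omega),
    show n - 1 - (n - 1 - b) = b by omega]

end GeneratingFunction

section RowIdentity

open PowerSeries

lemma Fcoeff_natCast_sub (k N b : ℕ) :
    Fcoeff d k ((N : ℤ) - b) = if b ≤ N then coeff (N - b) (F d k) else 0 := by
  unfold Fcoeff
  by_cases hb : b ≤ N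
  · rw [if_pos (by omega), if_pos hb]
    congr
    omega
  · rw [if_neg (by omega), if_neg hb]

lemma F_mul_prod_one_sub_erase (k : ℕ) (l : Fin d) :
    F d k * ∏ t ∈ univ.erase l, (1 - C (x d t) * X) =
      C (∏ i, (1 + β d * x d i)) *
        ((mk fun n => x d l ^ n) * ∏ ℓ ∈ range k, (1 + (X + C (β d)) * C (b d ℓ))) := by
  rw [F, prod_mul_distrib, ← map_prod, ← prod_geom_mul_prod_erase (x d) (mem_univ l)]
  ring

lemma sum_nodalCoeff_mul_Fcoeff (l : Fin d) {k N : ℕ} (h : k ≤ N) :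
    ∑ j : Fin d, nodalCoeffMatrix (x d) j l * Fcoeff d k ((N : ℤ) - (d - 1 - j : ℕ)) =
      (∏ i, (1 + β d * x d i)) * (x d l ^ (N - k) * fb d (x d l) k) := by
  simp only [Fcoeff_natCast_sub]
  rw [sum_nodalCoeffMatrix_mul_coeff, F_mul_prod_one_sub_erase, coeff_C_mul,
    coeff_geom_mul_prod _ _ _ h]
  rfl

lemma sum_seriesSum_G_mul_nodalCoeff (l : Fin d) (k : ℕ) (q : ℤ) (m : Fin d → ℤ)
    (hm : ∀ j : Fin d, m j = k - (d - 1 - j : ℕ)) :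
    ∑ j, seriesSum d (fun s => Ring.choose q s • (β d ^ s * G d k (m j + s))) *
        nodalCoeffMatrix (x d) j l =
      (∏ i, (1 + β d * x d i)) * fb d (x d l) k * binomSeries (x d l) (q - 1) := by
  simp only [seriesSum_choose_G, seriesSum_mul _ (betaPowDvd_smul_β_pow_mul _ _)]
  rw [← seriesSum_sum, binomSeries, mul_seriesSum _ (betaPowDvd_smul_β_pow_mul _ _)]
  congr 1
  funext s
  have hrow := sum_nodalCoeff_mul_Fcoeff l (N := k + s) le_self_add
  rw [Nat.add_sub_cancel_left] at hrow
  calc ∑ j, Ring.choose (q - 1) s • (β d ^ s * Fcoeff d k (m j + s)) * nodalCoeffMatrix (x d) j l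
      = Ring.choose (q - 1) s • (β d ^ s * ∑ j : Fin d, nodalCoeffMatrix (x d) j l *
          Fcoeff d k (((k + s : ℕ) : ℤ) - (d - 1 - j : ℕ))) := by
        rw [mul_sum, smul_sum]
        refine sum_congr rfl fun j _ => ?_
        rw [hm j, smul_mul_assoc, mul_assoc, mul_comm (Fcoeff _ _ _)]
        push_cast
        ring_nf
    _ = _ := by
        rw [hrow]
        simp only [zsmul_eq_mul]
        ring

end RowIdentity

instance : IsDomain (R d) := NoZeroDivisors.to_isDomain _

lemma x_injective : Function.Injective (x d) := fun i j h => by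
  simpa [x] using MvPowerSeries.X_inj.mp h

lemma one_add_β_mul_ne_zero (y : R d) (hy : MvPowerSeries.constantCoeff y = 0) :
    1 + β d * y ≠ 0 := fun h => by
  simpa [hy] using congrArg MvPowerSeries.constantCoeff h

/-- Determinant formula (HM form): the bi-alternant determinant equals the Vandermonde
product times the Jacobi–Trudi type determinant with binomial coefficients `C(i-d, s)`. -/
theorem grothendieck_det_formula_HM
    (d : ℕ) (a : Fin d → ℤ) (ha : ∀ i : Fin d, 0 ≤ a i + d - ((i : ℕ) + 1)) :
    Matrix.det (Matrix.of fun i j : Fin d =>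
        fb d (x d j) (a i + d - ((i : ℕ) + 1)).toNat * (1 + β d * x d j) ^ (i : ℕ))
      = (∏ i : Fin d, ∏ j ∈ Finset.Ioi i, (x d i - x d j)) *
        Matrix.det (Matrix.of fun i j : Fin d =>
          seriesSum d fun s =>
            Ring.choose (((i : ℕ) : ℤ) + 1 - d) s •
              (β d ^ s *
                G d (a i + d - ((i : ℕ) + 1)).toNat (a i + (j : ℕ) - (i : ℕ) + s))) := by
  set A := ∏ t, (1 + β d * x d t)
  set L : Matrix (Fin d) (Fin d) (R d) := Matrix.of fun i j =>
    fb d (x d j) (a i + d - ((i : ℕ) + 1)).toNat * (1 + β d * x d j) ^ (i : ℕ)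
  set H : Matrix (Fin d) (Fin d) (R d) := Matrix.of fun i j =>
    seriesSum d fun s => Ring.choose (((i : ℕ) : ℤ) + 1 - d) s •
      (β d ^ s * G d (a i + d - ((i : ℕ) + 1)).toNat (a i + (j : ℕ) - (i : ℕ) + s))
  have hHE : A • L =
      H * nodalCoeffMatrix (x d) * Matrix.diagonal fun l => (1 + β d * x d l) ^ d := by
    refine Matrix.ext fun i l => ?_
    rw [Matrix.mul_diagonal, Matrix.mul_apply]
    simp only [H, Matrix.of_apply]
    rw [sum_seriesSum_G_mul_nodalCoeff l _ _ _ fun j => by have := ha i; omega,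
      show ((i : ℕ) : ℤ) + 1 - d - 1 = (i : ℕ) - d by ring, mul_assoc,
      binomSeries_sub_mul_one_add_pow _ i.isLt.le, mul_assoc]
    rfl
  have hA : A ^ d ≠ 0 := pow_ne_zero _ (prod_ne_zero_iff.mpr fun t _ =>
    one_add_β_mul_ne_zero _ (by simp [x]))
  have hdet := congrArg Matrix.det hHE
  rw [Matrix.det_smul, Fintype.card_fin, Matrix.det_mul, Matrix.det_mul, Matrix.det_diagonal,
    prod_pow, det_nodalCoeffMatrix (x_injective (d := d))] at hdet
  exact mul_left_cancel₀ hA (hdet.trans (by ring))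

end GrothDet
end

section
/- Let β, x₁,…,x_d, b₁, b₂,… be independent indeterminates and work in the ring of formal power series over ℤ in these variables. For a = (a₁,…,a_d) ∈ ℤ^d with a_i + d - i ≥ 0 for every i, the two Jacobi–Trudi type determinants agree: det( Σ_{s≥0} C(i-d, s) β^s G^{(a_i+d-i)}_{a_i+j-i+s} )_{1≤i,j≤d} = det( Σ_{s≥0} C(i-j, s) β^s G^{(a_i+d-i)}_{a_i+j-i+s} )_{1≤i,j≤d}, where C(n,s) denotes the generalized binomial coefficient defined by (1+x)^n = Σ_{s≥0} C(n,s) x^s for n ∈ ℤ. -/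
open scoped BigOperators

namespace GrothDet

/-!
Put `S_c(m) = ∑_{s≥0} C(c,s) βˢ g_{m+s}` (`binomTransform g c m`), the coefficient of `uᵐ` in
`(1+βu⁻¹)ᶜ ∑ₘ gₘ uᵐ`. Pascal's rule gives `S_{c+1} = (1 + E) S_c` for the shift
`(E h)(m) = β h(m+1)`, so by the binomial theorem `S_{c+t}(m) = ∑_r C(t,r) βʳ S_c(m+r)`.
Taking `c = i+1-d` and `t = d-1-j`, the matrix with entries `S_{i-j}(a_i+j-i)` is the one with
entries `S_{i+1-d}(a_i+j-i)` times a lower unitriangular matrix, hence both have the same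
determinant.
-/

open Finset

variable {d : ℕ}

lemma coeff_β_mul (f : R d) (n : Idx d →₀ ℕ) :
    MvPowerSeries.coeff n (β d * f) = if n (Sum.inl ()) = 0 then 0
      else MvPowerSeries.coeff (n - Finsupp.single (Sum.inl ()) 1) f := by
  rw [β, ← pow_one (MvPowerSeries.X _), MvPowerSeries.X_pow_eq, MvPowerSeries.coeff_monomial_mul]
  simp [Finsupp.single_le_iff, Nat.one_le_iff_ne_zero, ite_not]

lemma seriesSum_eq_add_β_mul {f g : ℕ → R d} (hfg : ∀ s, f (s + 1) = β d * g s) :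
    seriesSum d f = f 0 + β d * seriesSum d g := by
  ext n
  rw [map_add, coeff_seriesSum, sum_range_succ', add_comm, coeff_β_mul]
  split_ifs with hn
  · simp [hn]
  · rw [coeff_seriesSum]
    simp only [hfg, coeff_β_mul, hn, if_false, Finsupp.tsub_apply, Finsupp.single_eq_same,
      Nat.sub_add_cancel (Nat.one_le_iff_ne_zero.2 hn)]

noncomputable def binomTransform (g : ℤ → R d) (c m : ℤ) : R d :=
  seriesSum d fun s => Ring.choose c s • (β d ^ s * g (m + s))

noncomputable def βShift (d : ℕ) : Module.End (R d) (ℤ → R d) :=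
  β d • LinearMap.funLeft (R d) (R d) (· + 1)

lemma βShift_apply (h : ℤ → R d) (m : ℤ) : βShift d h m = β d * h (m + 1) := rfl

lemma βShift_pow_apply (r : ℕ) (h : ℤ → R d) (m : ℤ) :
    (βShift d ^ r) h m = β d ^ r * h (m + r) := by
  induction r generalizing m with
  | zero => simp
  | succ r ih =>
    rw [pow_succ', Module.End.mul_apply, βShift_apply, ih, pow_succ', mul_assoc, Nat.cast_succ,
      add_comm (r : ℤ) 1, ← add_assoc]

lemma binomTransform_eq_add_β_mul (g : ℤ → R d) (c m : ℤ) :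
    binomTransform g c m
      = g m + β d * seriesSum d fun s => Ring.choose c (s + 1) • (β d ^ s * g (m + 1 + s)) := by
  rw [binomTransform, seriesSum_eq_add_β_mul
    (g := fun s => Ring.choose c (s + 1) • (β d ^ s * g (m + 1 + s))) fun s => ?_]
  · simp
  · rw [pow_succ', mul_assoc, mul_smul_comm, Nat.cast_succ, add_comm (s : ℤ) 1, ← add_assoc]

lemma binomTransform_succ (g : ℤ → R d) (c : ℤ) :
    binomTransform g (c + 1) = (1 + βShift d) (binomTransform g c) := by
  funext m
  have hpascal : (fun s : ℕ => Ring.choose (c + 1) (s + 1) • (β d ^ s * g (m + 1 + s)))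
      = fun s => Ring.choose c s • (β d ^ s * g (m + 1 + s))
          + Ring.choose c (s + 1) • (β d ^ s * g (m + 1 + s)) := by
    funext s
    rw [Ring.choose_succ_succ, add_smul]
  rw [binomTransform_eq_add_β_mul, hpascal, seriesSum_add, LinearMap.add_apply,
    Module.End.one_apply, Pi.add_apply, binomTransform_eq_add_β_mul, βShift_apply, binomTransform]
  ring

lemma binomTransform_add_nat (g : ℤ → R d) (c : ℤ) (t : ℕ) :
    binomTransform g (c + t) = ((1 + βShift d) ^ t) (binomTransform g c) := by
  induction t with
  | zero => simp
  | succ t ih =>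
    rw [Nat.cast_succ, ← add_assoc, binomTransform_succ, ih, pow_succ', Module.End.mul_apply]

lemma binomTransform_add_nat_apply (g : ℤ → R d) (c : ℤ) (t : ℕ) (m : ℤ) :
    binomTransform g (c + t) m
      = ∑ r ∈ range (t + 1), t.choose r • (β d ^ r * binomTransform g c (m + r)) := by
  rw [binomTransform_add_nat, add_comm, (Commute.one_right _).add_pow, LinearMap.sum_apply,
    Finset.sum_apply]
  refine sum_congr rfl fun r _ => ?_
  rw [one_pow, mul_one, Module.End.mul_apply, Module.End.natCast_apply, βShift_pow_apply,
    Pi.smul_apply, mul_smul_comm]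

noncomputable def binomMatrix (d : ℕ) : Matrix (Fin d) (Fin d) (R d) :=
  Matrix.of fun k j => if (j : ℕ) ≤ k then (d - 1 - j).choose (k - j) • β d ^ ((k : ℕ) - j) else 0

lemma binomMatrix_isLowerTriangular : (binomMatrix d).IsLowerTriangular :=
  fun _ _ hkj => if_neg (not_le.2 hkj)

lemma det_binomMatrix : (binomMatrix d).det = 1 := by
  rw [Matrix.det_of_isLowerTriangular _ binomMatrix_isLowerTriangular]
  exact prod_eq_one fun j _ => by simp [binomMatrix]

lemma sum_fin_ite_le_eq_sum_range {M : Type*} [AddCommMonoid M] (j : ℕ) (u : ℕ → M) :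
    ∑ k : Fin d, (if j ≤ k then u (k - j) else 0) = ∑ r ∈ range (d - j), u r := by
  rw [Fin.sum_univ_eq_sum_range (fun k => if j ≤ k then u (k - j) else (0 : M)), ← sum_filter,
    show (range d).filter (j ≤ ·) = Ico j d by ext; simp [and_comm], sum_Ico_eq_sum_range]
  simp

lemma binomTransform_matrix_eq_mul_binomMatrix (g : Fin d → ℤ → R d) (a : Fin d → ℤ) :
    Matrix.of (fun i j : Fin d => binomTransform (g i) ((i : ℕ) - (j : ℕ)) (a i + j - i))
      = Matrix.of (fun i j : Fin d => binomTransform (g i) ((i : ℕ) + 1 - d) (a i + j - i))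
        * binomMatrix d := by
  ext i j : 1
  have hc : ((i : ℕ) : ℤ) - (j : ℕ) = ((i : ℕ) + 1 - d : ℤ) + (d - 1 - j : ℕ) := by omega
  rw [Matrix.of_apply, hc, binomTransform_add_nat_apply, Matrix.mul_apply,
    show d - 1 - j + 1 = d - j by omega, ← sum_fin_ite_le_eq_sum_range]
  refine sum_congr rfl fun k _ => ?_
  simp only [Matrix.of_apply, binomMatrix]
  split_ifs with hjk
  · have hidx : a i + (j : ℕ) - (i : ℕ) + ((k - j : ℕ) : ℤ) = a i + k - i := by
      push_cast [hjk]
      ring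
    rw [hidx, mul_smul_comm, mul_comm]
  · rw [mul_zero]

theorem grothendieck_det_HM_eq_HIMN_general
    (d : ℕ) (a : Fin d → ℤ) :
    Matrix.det (Matrix.of fun i j : Fin d =>
        seriesSum d fun s =>
          Ring.choose (((i : ℕ) : ℤ) + 1 - d) s •
            (β d ^ s * G d (a i + d - ((i : ℕ) + 1)).toNat (a i + (j : ℕ) - (i : ℕ) + s)))
      = Matrix.det (Matrix.of fun i j : Fin d =>
          seriesSum d fun s =>
            Ring.choose (((i : ℕ) : ℤ) - ((j : ℕ) : ℤ)) s •
              (β d ^ s *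
                G d (a i + d - ((i : ℕ) + 1)).toNat (a i + (j : ℕ) - (i : ℕ) + s))) := by
  have hfactor := binomTransform_matrix_eq_mul_binomMatrix
    (fun i => G d (a i + d - ((i : ℕ) + 1)).toNat) a
  unfold binomTransform at hfactor
  rw [hfactor, Matrix.det_mul, det_binomMatrix, mul_one]

/-- The two Jacobi–Trudi type determinants, with binomial coefficients `C(i-d, s)` and
`C(i-j, s)` respectively, agree. -/
theorem grothendieck_det_HM_eq_HIMN
    (d : ℕ) (a : Fin d → ℤ) (ha : ∀ i : Fin d, 0 ≤ a i + d - ((i : ℕ) + 1)) :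
    Matrix.det (Matrix.of fun i j : Fin d =>
        seriesSum d fun s =>
          Ring.choose (((i : ℕ) : ℤ) + 1 - d) s •
            (β d ^ s * G d (a i + d - ((i : ℕ) + 1)).toNat (a i + (j : ℕ) - (i : ℕ) + s)))
      = Matrix.det (Matrix.of fun i j : Fin d =>
          seriesSum d fun s =>
            Ring.choose (((i : ℕ) : ℤ) - ((j : ℕ) : ℤ)) s •
              (β d ^ s *
                G d (a i + d - ((i : ℕ) + 1)).toNat (a i + (j : ℕ) - (i : ℕ) + s))) :=
  grothendieck_det_HM_eq_HIMN_general d a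

end GrothDet
end
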